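/- arXiv:2601.10353 — 7 statements merged into one kernel-verified Lean document; each statement's English description precedes it below -/
import Mathlib

section
/- Let L be a positive integer and v an odd positive integer. Let (Z_v, 𝔇) be an L-(v,g,b) half-sum disjoint packing (HSDP). Then the array P defined by P(f,k) = (f+k, i) if k − f ∈ D_i for some i ∈ [b], and P(f,k) = * otherwise, is an (L, K=v, F=v, Z=v−bg, S=bv) multiple-antenna placement delivery array (MAPDA). -/
/-- An `L`-`(v,g,b)` half-sum disjoint packing: `b` pairwise disjoint `g`-subsets of
`ZMod v` such that for every block `D i` and every `d ∈ D i`, the half-sum set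
`B = {(d + d')/2 : d' ∈ D i \ {d}}` satisfies `∑ i', |D i' ∩ B| < L`. -/
def IsHSDP (L v g b : ℕ) (D : Fin b → Finset (ZMod v)) : Prop :=
  (∀ i j : Fin b, i ≠ j → Disjoint (D i) (D j)) ∧
  (∀ i : Fin b, (D i).card = g) ∧
  (∀ i : Fin b, ∀ d ∈ D i,
    (∑ i' : Fin b,
      ((D i') ∩ (((D i).erase d).image fun d' => (2 : ZMod v)⁻¹ * (d + d'))).card) < L)

/-- An `(L, K, F, Z, S)` multiple-antenna placement delivery array, with rows `ιF`
(`|ιF| = F`), columns `ιK` (`|ιK| = K`), symbols `σ` (`|σ| = S`), and `*`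
represented by `none`:
(C1) each column has exactly `Z` stars;
(C2) each symbol occurs at least once;
(C3) each symbol appears at most once in each column;
(C4) for each symbol `s`, in the subarray of rows and columns containing `s`,
every row has at most `L` non-star entries. -/
def IsMAPDA {ιF ιK σ : Type*} [Fintype ιF] [Fintype ιK] [DecidableEq σ]
    (L Z : ℕ) (P : ιF → ιK → Option σ) : Prop :=
  (∀ k : ιK, (Finset.univ.filter fun f : ιF => P f k = none).card = Z) ∧
  (∀ s : σ, ∃ f k, P f k = some s) ∧
  (∀ s : σ, ∀ k : ιK, ∀ f₁ f₂ : ιF, P f₁ k = some s → P f₂ k = some s → f₁ = f₂) ∧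
  (∀ s : σ, ∀ f : ιF, (∃ k, P f k = some s) →
    (Finset.univ.filter fun k : ιK => (∃ f', P f' k = some s) ∧ P f k ≠ none).card ≤ L)

/-!
The symbol `(m, i)` sits exactly in the cells `(f, k)` with `k - f ∈ D i` and `f + k = m`, so a
column contains it at most once, and since `2` is invertible modulo the odd `v` it occurs at all.
For (C4) fix a cell `(f, k₀)` holding `(m, i)` and put `d = k₀ - f`. Any other column `k` holding
`(m, i)` has `d' = 2k - m ∈ D i \ {d}` and `k - f = (d + d') / 2`, so if `P f k` is not a star then
`k - f` lies in some `D j ∩ B` with `B` the half-sum set of `d`; the HSDP condition leaves fewer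
than `L` such columns besides `k₀`.
-/

open Finset Function

def IsBlockArray {G ι : Type*} [AddCommGroup G] (D : ι → Finset G)
    (P : G → G → Option (G × ι)) : Prop :=
  (∀ f k i, k - f ∈ D i → P f k = some (f + k, i)) ∧ (∀ f k, (∀ i, k - f ∉ D i) → P f k = none)

namespace IsBlockArray

variable {G ι : Type*} [AddCommGroup G] {D : ι → Finset G} {P : G → G → Option (G × ι)}

theorem eq_some (hP : IsBlockArray D P) {f k : G} {s : G × ι} (h : P f k = some s) :
    k - f ∈ D s.2 ∧ s.1 = f + k := by
  by_cases hex : ∃ i, k - f ∈ D i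
  · obtain ⟨i, hi⟩ := hex
    rw [hP.1 f k i hi, Option.some_inj] at h
    subst h
    exact ⟨hi, rfl⟩
  · push Not at hex
    simp [hP.2 f k hex] at h

theorem ne_none_iff (hP : IsBlockArray D P) {f k : G} : P f k ≠ none ↔ ∃ i, k - f ∈ D i := by
  refine ⟨fun h => ?_, fun ⟨i, hi⟩ => by simp [hP.1 f k i hi]⟩
  by_contra! hex
  exact h (hP.2 f k hex)

theorem eq_of_eq_some (hP : IsBlockArray D P) {f₁ f₂ k : G} {s : G × ι}
    (h₁ : P f₁ k = some s) (h₂ : P f₂ k = some s) : f₁ = f₂ :=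
  add_right_cancel ((hP.eq_some h₁).2.symm.trans (hP.eq_some h₂).2)

variable [Fintype G] [DecidableEq G] [Fintype ι]

theorem card_filter_ne_none (hP : IsBlockArray D P) (hD : Pairwise (Disjoint on D)) (k : G) :
    #{f | P f k ≠ none} = ∑ i, #(D i) := by
  have hcol : ({f | P f k ≠ none} : Finset G) = (univ.biUnion D).image (k - ·) := by
    ext f
    simp only [mem_filter, mem_univ, true_and, mem_image, mem_biUnion, hP.ne_none_iff]
    exact ⟨fun ⟨i, hi⟩ => ⟨k - f, ⟨i, hi⟩, sub_sub_cancel k f⟩,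
      fun ⟨d, ⟨i, hi⟩, hd⟩ => ⟨i, by rwa [← hd, sub_sub_cancel]⟩⟩
  rw [hcol, card_image_of_injective _ sub_right_injective,
    card_biUnion fun i _ j _ hij => hD hij]

theorem card_filter_eq_none (hP : IsBlockArray D P) (hD : Pairwise (Disjoint on D)) (k : G) :
    #{f | P f k = none} = Fintype.card G - ∑ i, #(D i) := by
  rw [← hP.card_filter_ne_none hD k, ← card_univ,
    ← card_filter_add_card_filter_not (s := univ) (P · k = none)]
  simp only [ne_eq, add_tsub_cancel_right]

end IsBlockArray

theorem ZMod.inv_two_mul_two {v : ℕ} (hv : Odd v) : (2 : ZMod v)⁻¹ * 2 = 1 :=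
  ZMod.inv_mul_of_unit _ (by exact_mod_cast (ZMod.isUnit_iff_coprime 2 v).mpr hv.coprime_two_left)

def halfSums {v : ℕ} (A : Finset (ZMod v)) (d : ZMod v) : Finset (ZMod v) :=
  (A.erase d).image fun d' => (2 : ZMod v)⁻¹ * (d + d')

namespace IsBlockArray

variable {v : ℕ} {ι : Type*} {D : ι → Finset (ZMod v)} {P : ZMod v → ZMod v → Option (ZMod v × ι)}

theorem exists_eq_some (hv : Odd v) (hP : IsBlockArray D P) {i : ι} (hi : (D i).Nonempty)
    (m : ZMod v) : ∃ f k, P f k = some (m, i) := by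
  obtain ⟨d, hd⟩ := hi
  have h2 := ZMod.inv_two_mul_two hv
  refine ⟨(2 : ZMod v)⁻¹ * (m - d), (2 : ZMod v)⁻¹ * (m + d), ?_⟩
  have hdiff : (2 : ZMod v)⁻¹ * (m + d) - (2 : ZMod v)⁻¹ * (m - d) = d := by
    linear_combination d * h2
  have hsum : (2 : ZMod v)⁻¹ * (m - d) + (2 : ZMod v)⁻¹ * (m + d) = m := by
    linear_combination m * h2
  rw [hP.1 _ _ i (by rwa [hdiff]), hsum]

theorem sub_mem_halfSums (hv : Odd v) (hP : IsBlockArray D P) {f f' k k₀ : ZMod v}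
    {s : ZMod v × ι} (h₀ : P f k₀ = some s) (h : P f' k = some s) (hk : k ≠ k₀) :
    k - f ∈ halfSums (D s.2) (k₀ - f) := by
  have h2 := ZMod.inv_two_mul_two hv
  obtain ⟨hd₀, hm₀⟩ := hP.eq_some h₀
  obtain ⟨hd, hm⟩ := hP.eq_some h
  have hne : k - f' ≠ k₀ - f := by
    intro heq
    apply hk
    linear_combination (2 : ZMod v)⁻¹ * (heq - hm + hm₀) - (k - k₀) * h2
  refine mem_image.mpr ⟨k - f', mem_erase.mpr ⟨hne, hd⟩, ?_⟩
  linear_combination (2 : ZMod v)⁻¹ * (hm - hm₀) + (k - f) * h2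

theorem card_columns_le [NeZero v] [Fintype ι] [DecidableEq ι] (hv : Odd v)
    (hP : IsBlockArray D P) {f k₀ : ZMod v} {s : ZMod v × ι} (h₀ : P f k₀ = some s) :
    #{k | (∃ f', P f' k = some s) ∧ P f k ≠ none} ≤
      ∑ j, #(D j ∩ halfSums (D s.2) (k₀ - f)) + 1 := by
  set B := halfSums (D s.2) (k₀ - f)
  have hsub : ({k | (∃ f', P f' k = some s) ∧ P f k ≠ none} : Finset (ZMod v)) ⊆
      insert k₀ ((univ.biUnion fun j => D j ∩ B).image (· + f)) := by
    intro k hk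
    simp only [mem_filter, mem_univ, true_and, hP.ne_none_iff] at hk
    obtain ⟨⟨f', hf'⟩, j, hj⟩ := hk
    rcases eq_or_ne k k₀ with rfl | hk
    · exact mem_insert_self _ _
    · have hkf : k - f ∈ D j ∩ B := mem_inter.mpr ⟨hj, hP.sub_mem_halfSums hv h₀ hf' hk⟩
      exact mem_insert_of_mem (mem_image.mpr ⟨k - f, mem_biUnion.mpr ⟨j, mem_univ _, hkf⟩,
        sub_add_cancel k f⟩)
  calc _ ≤ _ := card_le_card hsub
    _ ≤ #((univ.biUnion fun j => D j ∩ B).image (· + f)) + 1 := card_insert_le _ _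
    _ ≤ _ := by gcongr; exact card_image_le.trans card_biUnion_le

end IsBlockArray

theorem stmt_4_general (L v g b : ℕ) [NeZero v] (hv : Odd v) (hg : 0 < g)
    (D : Fin b → Finset (ZMod v)) (hD : IsHSDP L v g b D)
    (P : ZMod v → ZMod v → Option (ZMod v × Fin b))
    (hP1 : ∀ f k : ZMod v, ∀ i : Fin b, k - f ∈ D i → P f k = some (f + k, i))
    (hP2 : ∀ f k : ZMod v, (∀ i : Fin b, k - f ∉ D i) → P f k = none) :
    IsMAPDA L (v - b * g) P ∧ Fintype.card (ZMod v × Fin b) = b * v := by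
  obtain ⟨hdisj, hcard, hhalf⟩ := hD
  have hP : IsBlockArray D P := ⟨hP1, hP2⟩
  refine ⟨⟨fun k => ?_, fun ⟨m, i⟩ => ?_, fun s k f₁ f₂ => hP.eq_of_eq_some,
    fun s f ⟨k₀, h₀⟩ => ?_⟩, by simp [ZMod.card, mul_comm]⟩
  · simp [hP.card_filter_eq_none hdisj k, hcard, ZMod.card]
  · exact hP.exists_eq_some hv (card_pos.mp (hcard i ▸ hg)) m
  · exact (hP.card_columns_le hv h₀).trans (hhalf s.2 _ (hP.eq_some h₀).1)

/-- given an `L`-`(v,g,b)` HSDP on `ZMod v` (`v` odd), the array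
`P(f,k) = (f + k, i)` if `k - f ∈ D i` for some `i`, and `P(f,k) = *` otherwise,
is an `(L, K = v, F = v, Z = v - b*g, S = b*v)` MAPDA (the symbol set
`ZMod v × Fin b` has exactly `b * v` elements). -/
theorem stmt_4 (L v g b : ℕ) [NeZero v] (hv : Odd v) (hL : 0 < L) (hg : 0 < g)
    (D : Fin b → Finset (ZMod v)) (hD : IsHSDP L v g b D)
    (P : ZMod v → ZMod v → Option (ZMod v × Fin b))
    (hP1 : ∀ f k : ZMod v, ∀ i : Fin b, k - f ∈ D i → P f k = some (f + k, i))
    (hP2 : ∀ f k : ZMod v, (∀ i : Fin b, k - f ∉ D i) → P f k = none) :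
    IsMAPDA L (v - b * g) P ∧ Fintype.card (ZMod v × Fin b) = b * v :=
  stmt_4_general L v g b hv hg D hD P hP1 hP2
end

section
/- With f defined as in the recursive construction (f(1)=m_1; f(i)=m_i(2Σ_{j<i}f(j)+1) for 2≤i≤n; f(i)=(m_{i−1}+1)f(i−1)/m_{i−1} for n+1≤i≤n+r−1; f(n+r)=(m_{n+r−1}+1)f(n+r−1)/m_{n+r−1}+(2^r−L)f(n+1), where m_{n+1}=⋯=m_{n+r}=1), one has Σ_{i=n+1}^{n+r} f(i) = (2^{r+1} − L − 1) f(n+1), and f(n+1) = (1 + m_n)(1 + 2Σ_{i=1}^{n−1} f(i)). -/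
/-!
On the tail `n+1, …, n+r` all multipliers equal `1`, so the recursion just doubles:
`f (n+1+k) = 2^k f (n+1)` up to the last index, where the extra term `(2^r - L) f (n+1)` enters.
Summing the geometric progression gives the first identity. The second one is the first step of
the tail recursion, since `f n / m n = 1 + 2 ∑_{i<n} f i` by the recursion on `1, …, n`.
When `r = 1` the tail consists of the last index only, and the recursion there forces `L = 2`.
-/

open Finset

lemma div_eq_one_add_two_mul_sum {m f : ℕ → ℕ} {n : ℕ} (hn : 0 < n) (hm : 0 < m n)
    (hf1 : f 1 = m 1)
    (hf2 : 2 ≤ n → f n = m n * (2 * (∑ j ∈ Icc 1 (n - 1), f j) + 1)) :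
    f n / m n = 1 + 2 * ∑ i ∈ Icc 1 (n - 1), f i := by
  rcases Nat.eq_or_lt_of_le hn with rfl | hn2
  · simp [hf1, Nat.div_self hm]
  · rw [hf2 hn2, Nat.mul_div_cancel_left _ hm, add_comm]

lemma eq_two_pow_mul_of_doubling {g : ℕ → ℕ} {K : ℕ} (hg : ∀ k < K, g (k + 1) = 2 * g k) :
    ∀ k ≤ K, g k = 2 ^ k * g 0 := by
  intro k hk
  induction k with
  | zero => simp
  | succ k ih => rw [hg k hk, ih (by omega), pow_succ]; ring

lemma sum_range_two_pow_mul (K c : ℕ) : ∑ k ∈ range K, 2 ^ k * c = (2 ^ K - 1) * c := by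
  rw [← sum_mul, Nat.geomSum_eq le_rfl]
  simp

lemma sum_range_of_doubling_add {g : ℕ → ℕ} {K e : ℕ} (hg : ∀ k < K, g (k + 1) = 2 * g k)
    (hlast : g (K + 1) = 2 * g K + e) :
    ∑ k ∈ range (K + 2), g k = (2 ^ (K + 2) - 1) * g 0 + e := by
  have hpow := eq_two_pow_mul_of_doubling hg
  rw [sum_range_succ, hlast, hpow K le_rfl,
    sum_congr rfl fun k hk => hpow k (Nat.lt_add_one_iff.mp (mem_range.mp hk)),
    sum_range_two_pow_mul]
  have : 1 ≤ 2 ^ K := Nat.one_le_two_pow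
  zify [this, Nat.one_le_two_pow (n := K + 1), Nat.one_le_two_pow (n := K + 2)]
  ring

lemma eq_zero_of_eq_add_mul_self {x a c : ℕ} (ha : 0 < a) (h : x = a + c * x) : c = 0 := by
  by_contra hc
  have := Nat.le_mul_of_pos_left x (Nat.pos_of_ne_zero hc)
  omega

lemma sum_Icc_tail_of_two_le {L r n : ℕ} {m f : ℕ → ℕ} (hr2 : 2 ≤ r) (hLr : L ≤ 2 ^ r)
    (hm1 : ∀ i, n + 1 ≤ i → i ≤ n + r → m i = 1)
    (hf3 : ∀ i, n + 1 ≤ i → i ≤ n + r - 1 →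
      f i = (m (i - 1) + 1) * (f (i - 1) / m (i - 1)))
    (hf4 : f (n + r) =
      (m (n + r - 1) + 1) * (f (n + r - 1) / m (n + r - 1)) + (2 ^ r - L) * f (n + 1)) :
    ∑ i ∈ Icc (n + 1) (n + r), f i = (2 ^ (r + 1) - L - 1) * f (n + 1) := by
  have hdouble : ∀ k < r - 2, f (n + 1 + (k + 1)) = 2 * f (n + 1 + k) := by
    intro k hk
    rw [hf3 _ (by omega) (by omega), show n + 1 + (k + 1) - 1 = n + 1 + k by omega,
      hm1 _ (by omega) (by omega), Nat.div_one]
  have hlast : f (n + 1 + (r - 2 + 1)) = 2 * f (n + 1 + (r - 2)) + (2 ^ r - L) * f (n + 1) := by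
    rw [show n + 1 + (r - 2 + 1) = n + r by omega, hf4,
      show n + r - 1 = n + 1 + (r - 2) by omega, hm1 _ (by omega) (by omega), Nat.div_one]
  have htail : ∑ i ∈ Icc (n + 1) (n + r), f i = ∑ k ∈ range (r - 2 + 2), f (n + 1 + k) := by
    rw [← Ico_add_one_right_eq_Icc, sum_Ico_eq_sum_range]
    congr 2
    omega
  rw [htail, sum_range_of_doubling_add (g := fun k => f (n + 1 + k)) hdouble hlast,
    Nat.sub_add_cancel hr2, ← add_mul, pow_succ]
  have : 1 ≤ 2 ^ r := Nat.one_le_two_pow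
  congr 1
  omega

theorem stmt_7_general (L r n : ℕ) (hr : 0 < r) (hLr : L ≤ 2 ^ r) (hn : 0 < n)
    (m f : ℕ → ℕ) (hm : ∀ i, 0 < m i)
    (hm1 : ∀ i, n + 1 ≤ i → i ≤ n + r → m i = 1)
    (hf1 : f 1 = m 1)
    (hf2 : ∀ i, 2 ≤ i → i ≤ n → f i = m i * (2 * (∑ j ∈ Finset.Icc 1 (i - 1), f j) + 1))
    (hf3 : ∀ i, n + 1 ≤ i → i ≤ n + r - 1 →
      f i = (m (i - 1) + 1) * (f (i - 1) / m (i - 1)))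
    (hf4 : f (n + r) =
      (m (n + r - 1) + 1) * (f (n + r - 1) / m (n + r - 1)) + (2 ^ r - L) * f (n + 1)) :
    (∑ i ∈ Finset.Icc (n + 1) (n + r), f i = (2 ^ (r + 1) - L - 1) * f (n + 1)) ∧
    f (n + 1) = (1 + m n) * (1 + 2 * ∑ i ∈ Finset.Icc 1 (n - 1), f i) := by
  have hhead : f n / m n = 1 + 2 * ∑ i ∈ Icc 1 (n - 1), f i :=
    div_eq_one_add_two_mul_sum hn (hm n) hf1 (hf2 n · le_rfl)
  obtain rfl | hr2 : r = 1 ∨ 2 ≤ r := by omega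
  · rw [Nat.add_sub_cancel, hhead] at hf4
    obtain rfl : L = 2 := by
      have := eq_zero_of_eq_add_mul_self (by positivity) hf4
      omega
    exact ⟨by simp, by rw [hf4]; ring⟩
  refine ⟨sum_Icc_tail_of_two_le hr2 hLr hm1 hf3 hf4, ?_⟩
  rw [hf3 (n + 1) le_rfl (by omega), Nat.add_sub_cancel, hhead, add_comm (m n)]

/-- with `f` defined by the recursion of Construction 2, one has
`∑_{i=n+1}^{n+r} f i = (2^{r+1} - L - 1) * f (n+1)` and
`f (n+1) = (1 + m n) * (1 + 2 * ∑_{i=1}^{n-1} f i)`. -/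
theorem stmt_7 (L r n : ℕ) (hL : 0 < L) (hr : 0 < r) (hLr : L ≤ 2 ^ r) (hn : 0 < n)
    (m f : ℕ → ℕ) (hm : ∀ i, 0 < m i)
    (hm1 : ∀ i, n + 1 ≤ i → i ≤ n + r → m i = 1)
    (hf1 : f 1 = m 1)
    (hf2 : ∀ i, 2 ≤ i → i ≤ n → f i = m i * (2 * (∑ j ∈ Finset.Icc 1 (i - 1), f j) + 1))
    (hdvd : ∀ i, 1 ≤ i → i ≤ n + r → m i ∣ f i)
    (hf3 : ∀ i, n + 1 ≤ i → i ≤ n + r - 1 →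
      f i = (m (i - 1) + 1) * (f (i - 1) / m (i - 1)))
    (hf4 : f (n + r) =
      (m (n + r - 1) + 1) * (f (n + r - 1) / m (n + r - 1)) + (2 ^ r - L) * f (n + 1)) :
    (∑ i ∈ Finset.Icc (n + 1) (n + r), f i = (2 ^ (r + 1) - L - 1) * f (n + 1)) ∧
    f (n + 1) = (1 + m n) * (1 + 2 * ∑ i ∈ Finset.Icc 1 (n - 1), f i) :=
  stmt_7_general L r n hr hLr hn m f hm hm1 hf1 hf2 hf3 hf4
end

section
/- With x_i = f(i)/m_i where f is the recursive construction (f(1)=m_1; f(i)=m_i(2Σ_{j<i}f(j)+1) for 2≤i≤n; f(i)=(m_{i−1}+1)f(i−1)/m_{i−1} for n+1≤i≤n+r−1; f(n+r)=(m_{n+r−1}+1)f(n+r−1)/m_{n+r−1}+(2^r−L)f(n+1); m_{n+1}=⋯=m_{n+r}=1), the following growth inequalities hold: (a) for each i ∈ [n−1] and any a_j ∈ [m_j], a_{i+1} x_{i+1} > 2 Σ_{j=1}^i a_j x_j; (b) x_{n+1} > Σ_{j=1}^n a_j x_j for any a_j ∈ [m_j]; (c) for each i ∈ [n+1 : n+r−1],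 x_{i+1} > Σ_{j=1}^n a_j x_j + Σ_{j=n+1}^i x_j. -/
/-!
For `i ≤ n` the recursion gives `x i = 2 (f 1 + ⋯ + f (i-1)) + 1`, and `a j * x j ≤ m j * x j = f j`,
so each `x (i+1)` beats twice every admissible sum below it. On the tail `m i = 1`, so `x i = f i`
and the recursion at least doubles it; in particular `x (n+1) ≥ (m n + 1) x n = f n + x n`, which
exceeds `f 1 + ⋯ + f n`. Doubling then carries the bound along the tail.
-/

lemma sum_mul_le_sum_of_le {ι : Type*} (s : Finset ι) {a m x f : ι → ℕ}
    (ha : ∀ j ∈ s, a j ≤ m j) (hx : ∀ j, x j * m j = f j) :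
    ∑ j ∈ s, a j * x j ≤ ∑ j ∈ s, f j :=
  Finset.sum_le_sum fun j hj => by
    rw [← hx j, mul_comm]
    exact Nat.mul_le_mul_left _ (ha j hj)

lemma add_sum_Icc_lt_of_two_mul_le (y : ℕ → ℕ) {s k K : ℕ} (hs : s < y (k + 1))
    (hy : ∀ j, k < j → j < K → 2 * y j ≤ y (j + 1)) {i : ℕ} (hki : k ≤ i) (hiK : i < K) :
    s + ∑ j ∈ Finset.Icc (k + 1) i, y j < y (i + 1) := by
  induction i, hki using Nat.le_induction with
  | base => simpa [Finset.Icc_eq_empty] using hs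
  | succ i hki ih =>
    rw [Finset.sum_Icc_succ_top (by omega)]
    have := ih (by omega)
    have := hy (i + 1) (by omega) hiK
    omega

lemma x_succ_eq_two_mul_sum_add_one {n : ℕ} {m f x : ℕ → ℕ} (hm : ∀ i, 0 < m i)
    (hf1 : f 1 = m 1)
    (hf2 : ∀ i, 2 ≤ i → i ≤ n → f i = m i * (2 * (∑ j ∈ Finset.Icc 1 (i - 1), f j) + 1))
    (hx : ∀ i, x i * m i = f i) {i : ℕ} (hi : i < n) :
    x (i + 1) = 2 * ∑ j ∈ Finset.Icc 1 i, f j + 1 := by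
  have hf : f (i + 1) = m (i + 1) * (2 * ∑ j ∈ Finset.Icc 1 i, f j + 1) := by
    rcases Nat.eq_zero_or_pos i with rfl | hi0
    · simpa using hf1
    · simpa using hf2 (i + 1) (by omega) hi
  exact Nat.eq_of_mul_eq_mul_left (hm (i + 1)) (by rw [mul_comm, hx, hf])

lemma succ_mul_x_le_x_succ {n r : ℕ} {m f x : ℕ → ℕ} (hm : ∀ i, 0 < m i)
    (hm1 : ∀ i, n + 1 ≤ i → i ≤ n + r → m i = 1)
    (hf3 : ∀ i, n + 1 ≤ i → i ≤ n + r - 1 →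
      f i = (m (i - 1) + 1) * (f (i - 1) / m (i - 1)))
    (hf4 : (m (n + r - 1) + 1) * (f (n + r - 1) / m (n + r - 1)) ≤ f (n + r))
    (hx : ∀ i, x i * m i = f i) {i : ℕ} (hni : n ≤ i) (hir : i < n + r) :
    (m i + 1) * x i ≤ x (i + 1) := by
  have hxi : f i / m i = x i := by rw [← hx i, Nat.mul_div_cancel _ (hm i)]
  have hxi1 : x (i + 1) = f (i + 1) := by
    simpa [hm1 (i + 1) (by omega) (by omega)] using hx (i + 1)
  rw [hxi1]
  rcases Nat.lt_or_ge (i + 1) (n + r) with h | h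
  · simpa [hxi] using (hf3 (i + 1) (by omega) (by omega)).ge
  · obtain rfl : i = n + r - 1 := by omega
    rwa [show n + r - 1 + 1 = n + r by omega, ← hxi]

theorem stmt_8_general (L r n : ℕ) (hr : 0 < r) (hn : 0 < n)
    (m f : ℕ → ℕ) (hm : ∀ i, 0 < m i)
    (hm1 : ∀ i, n + 1 ≤ i → i ≤ n + r → m i = 1)
    (hf1 : f 1 = m 1)
    (hf2 : ∀ i, 2 ≤ i → i ≤ n → f i = m i * (2 * (∑ j ∈ Finset.Icc 1 (i - 1), f j) + 1))
    (hf3 : ∀ i, n + 1 ≤ i → i ≤ n + r - 1 →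
      f i = (m (i - 1) + 1) * (f (i - 1) / m (i - 1)))
    (hf4 : f (n + r) =
      (m (n + r - 1) + 1) * (f (n + r - 1) / m (n + r - 1)) + (2 ^ r - L) * f (n + 1))
    (x : ℕ → ℕ) (hx : ∀ i, x i * m i = f i) :
    (∀ i, 1 ≤ i → i + 1 ≤ n → ∀ a : ℕ → ℕ, (∀ j, 1 ≤ j → j ≤ n → 1 ≤ a j ∧ a j ≤ m j) →
      2 * ∑ j ∈ Finset.Icc 1 i, a j * x j < a (i + 1) * x (i + 1)) ∧
    (∀ a : ℕ → ℕ, (∀ j, 1 ≤ j → j ≤ n → 1 ≤ a j ∧ a j ≤ m j) →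
      ∑ j ∈ Finset.Icc 1 n, a j * x j < x (n + 1)) ∧
    (∀ i, n + 1 ≤ i → i ≤ n + r - 1 → ∀ a : ℕ → ℕ,
      (∀ j, 1 ≤ j → j ≤ n → 1 ≤ a j ∧ a j ≤ m j) →
      (∑ j ∈ Finset.Icc 1 n, a j * x j) + ∑ j ∈ Finset.Icc (n + 1) i, x j < x (i + 1)) := by
  have hxf := fun i => x_succ_eq_two_mul_sum_add_one (i := i) hm hf1 hf2 hx
  have htail := fun i => succ_mul_x_le_x_succ (i := i) hm hm1 hf3
    (hf4 ▸ Nat.le_add_right _ _) hx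
  have hsum : ∀ a : ℕ → ℕ, (∀ j, 1 ≤ j → j ≤ n → 1 ≤ a j ∧ a j ≤ m j) → ∀ i ≤ n,
      ∑ j ∈ Finset.Icc 1 i, a j * x j ≤ ∑ j ∈ Finset.Icc 1 i, f j := by
    refine fun a ha i hi => sum_mul_le_sum_of_le _ (fun j hj => ?_) hx
    rw [Finset.mem_Icc] at hj
    exact (ha j hj.1 (by omega)).2
  have partb : ∀ a : ℕ → ℕ, (∀ j, 1 ≤ j → j ≤ n → 1 ≤ a j ∧ a j ≤ m j) →
      ∑ j ∈ Finset.Icc 1 n, a j * x j < x (n + 1) := by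
    intro a ha
    obtain ⟨k, rfl⟩ : ∃ k, n = k + 1 := ⟨n - 1, by omega⟩
    have hle := hsum a ha (k + 1) le_rfl
    rw [Finset.sum_Icc_succ_top (by omega : 1 ≤ k + 1) f, ← hx (k + 1)] at hle
    have := hxf k (by omega)
    have := htail (k + 1) le_rfl (by omega)
    nlinarith
  refine ⟨fun i hi hin a ha => ?_, partb, fun i hi hir a ha => ?_⟩
  · have := hsum a ha i (by omega)
    have := hxf i hin
    have := Nat.le_mul_of_pos_left (x (i + 1)) (ha (i + 1) (by omega) hin).1
    omega
  · refine add_sum_Icc_lt_of_two_mul_le x (partb a ha) (K := n + r) (fun j hj hjr => ?_)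
      (i := i) (by omega) (by omega)
    simpa [hm1 j hj (by omega)] using htail j (by omega) hjr

/-- with `x i = f i / m i` (exact division) where `f` is the recursion of
Construction 2, the growth inequalities hold:
(a) for each `i ∈ [n-1]` and coefficients `a j ∈ [m j]`,
    `a (i+1) * x (i+1) > 2 * ∑_{j=1}^i a j * x j`;
(b) `x (n+1) > ∑_{j=1}^n a j * x j`;
(c) for `i ∈ [n+1 : n+r-1]`, `x (i+1) > ∑_{j=1}^n a j * x j + ∑_{j=n+1}^i x j`. -/
theorem stmt_8 (L r n : ℕ) (hL : 0 < L) (hr : 0 < r) (hLr : L ≤ 2 ^ r) (hn : 0 < n)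
    (m f : ℕ → ℕ) (hm : ∀ i, 0 < m i)
    (hm1 : ∀ i, n + 1 ≤ i → i ≤ n + r → m i = 1)
    (hf1 : f 1 = m 1)
    (hf2 : ∀ i, 2 ≤ i → i ≤ n → f i = m i * (2 * (∑ j ∈ Finset.Icc 1 (i - 1), f j) + 1))
    (hdvd : ∀ i, 1 ≤ i → i ≤ n + r → m i ∣ f i)
    (hf3 : ∀ i, n + 1 ≤ i → i ≤ n + r - 1 →
      f i = (m (i - 1) + 1) * (f (i - 1) / m (i - 1)))
    (hf4 : f (n + r) =
      (m (n + r - 1) + 1) * (f (n + r - 1) / m (n + r - 1)) + (2 ^ r - L) * f (n + 1))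
    (x : ℕ → ℕ) (hx : ∀ i, x i * m i = f i) :
    (∀ i, 1 ≤ i → i + 1 ≤ n → ∀ a : ℕ → ℕ, (∀ j, 1 ≤ j → j ≤ n → 1 ≤ a j ∧ a j ≤ m j) →
      2 * ∑ j ∈ Finset.Icc 1 i, a j * x j < a (i + 1) * x (i + 1)) ∧
    (∀ a : ℕ → ℕ, (∀ j, 1 ≤ j → j ≤ n → 1 ≤ a j ∧ a j ≤ m j) →
      ∑ j ∈ Finset.Icc 1 n, a j * x j < x (n + 1)) ∧
    (∀ i, n + 1 ≤ i → i ≤ n + r - 1 → ∀ a : ℕ → ℕ,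
      (∀ j, 1 ≤ j → j ≤ n → 1 ≤ a j ∧ a j ≤ m j) →
      (∑ j ∈ Finset.Icc 1 n, a j * x j) + ∑ j ∈ Finset.Icc (n + 1) i, x j < x (i + 1)) :=
  stmt_8_general L r n hr hn m f hm hm1 hf1 hf2 hf3 hf4 x hx
end

section
/- In Construction 2, suppose a half-sum z = Σ_{i=1}^n γ_i a_i x_i + Σ_{i=n+1}^{n+r} γ_i x_i (γ_i ∈ {−1,0,1}, not all γ equal to the full sign vector, i.e., some γ_i = 0) lies in some block D_{a'} of the construction. Then γ_i ≠ 0 for all i ∈ [n], and there exists at least one index s ∈ [n+1 : n+r] with γ_s = 0 (the Tail–Zero property). -/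
/-!
Subtracting the two representations of `z` leaves `∑_{i ≤ n} e_i x_i + T = 0` with
`e_i = γ_i a_i - β_i a'_i`, so `|e_i| ≤ 2 m_i`, and with `T` a multiple of `f(n+1) = (m_n + 1) x_n`,
because every tail weight is a multiple of `f(n+1)`. The head weights are superincreasing,
`x_i = 2 ∑_{j < i} m_j x_j + 1`, so a head combination equal to a multiple `c x_n` forces
`e_i = 0` for `i < n` and `e_n = c`. Hence `m_i + 1 ∣ e_i` for every `i ≤ n`; but `γ_i = 0` would
give `e_i = -β_i a'_i` with `1 ≤ |e_i| ≤ m_i`.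
-/

open Finset

section Superincreasing

variable {x w e : ℕ → ℤ}

lemma abs_sum_mul_le_sum_mul (s : Finset ℕ) (hx : ∀ j, 0 ≤ x j) (he : ∀ j ∈ s, |e j| ≤ w j) :
    |∑ j ∈ s, e j * x j| ≤ ∑ j ∈ s, w j * x j :=
  (abs_sum_le_sum_abs _ _).trans <| sum_le_sum fun j hj => by
    rw [abs_mul, abs_of_nonneg (hx j)]
    exact mul_le_mul_of_nonneg_right (he j hj) (hx j)

lemma coeffs_of_sum_mul_eq_mul_last {k : ℕ} {c : ℤ} (hk : 1 ≤ k) (hx : ∀ j, 0 ≤ x j)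
    (hsup : ∀ i ∈ Icc 1 k, ∑ j ∈ Icc 1 (i - 1), w j * x j < x i)
    (he : ∀ j ∈ Icc 1 k, |e j| ≤ w j) (hsum : ∑ j ∈ Icc 1 k, e j * x j = c * x k) :
    (∀ j ∈ Ico 1 k, e j = 0) ∧ e k = c := by
  induction k, hk using Nat.le_induction generalizing c with
  | base =>
    have hx1 : 0 < x 1 := by simpa using hsup 1 (by simp)
    simp only [Icc_self, sum_singleton] at hsum
    exact ⟨by simp, mul_right_cancel₀ hx1.ne' hsum⟩
  | succ k hk ih =>
    have hlt : |∑ j ∈ Icc 1 k, e j * x j| < x (k + 1) :=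
      (abs_sum_mul_le_sum_mul _ hx fun j hj => he j (by simp at hj ⊢; omega)).trans_lt
        (by simpa using hsup (k + 1) (by simp))
    rw [sum_Icc_succ_top (by omega)] at hsum
    have hlow : ∑ j ∈ Icc 1 k, e j * x j = 0 :=
      Int.eq_zero_of_abs_lt_dvd ⟨c - e (k + 1), by linarith⟩ hlt
    have htop : e (k + 1) = c :=
      mul_right_cancel₀ ((abs_nonneg _).trans_lt hlt).ne' (by linarith)
    obtain ⟨hbelow, hk0⟩ := ih (c := 0) (fun i hi => hsup i (by simp at hi ⊢; omega))
      (fun j hj => he j (by simp at hj ⊢; omega)) (by simpa using hlow)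
    refine ⟨fun j hj => ?_, htop⟩
    obtain ⟨hj1, hj2⟩ := mem_Ico.mp hj
    rcases (by omega : j < k ∨ j = k) with hj | rfl
    · exact hbelow j (mem_Ico.mpr ⟨hj1, hj⟩)
    · exact hk0

end Superincreasing

lemma abs_mul_sub_mul_le {γ β : ℤ} {a a' m : ℕ} (hγ : |γ| ≤ 1) (hβ : |β| ≤ 1) (ha : a ≤ m)
    (ha' : a' ≤ m) : |γ * a - β * a'| ≤ 2 * m := by
  have h1 : |γ * a| ≤ m := by
    rw [abs_mul, Nat.abs_cast]; nlinarith [abs_nonneg γ, (Nat.cast_le (α := ℤ)).mpr ha]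
  have h2 : |β * a'| ≤ m := by
    rw [abs_mul, Nat.abs_cast]; nlinarith [abs_nonneg β, (Nat.cast_le (α := ℤ)).mpr ha']
  linarith [abs_sub (γ * a) (β * a')]

lemma not_add_one_dvd_sign_mul {β : ℤ} {a m : ℕ} (hβ : β = 1 ∨ β = -1) (ha : 1 ≤ a ∧ a ≤ m) :
    ¬ ((m : ℤ) + 1) ∣ β * a := fun h => by
  have hβa : |β * a| = a := by rcases hβ with rfl | rfl <;> simp
  have h0 := Int.eq_zero_of_abs_lt_dvd h (by omega)
  rw [h0, abs_zero] at hβa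
  omega

section Construction

variable {n r L : ℕ} {m f x : ℕ → ℕ}

lemma x_eq_two_mul_sum_add_one (hm : ∀ i, 0 < m i) (hf1 : f 1 = m 1)
    (hf2 : ∀ i, 2 ≤ i → i ≤ n → f i = m i * (2 * (∑ j ∈ Icc 1 (i - 1), f j) + 1))
    (hx : ∀ i, x i * m i = f i) {i : ℕ} (hi : i ∈ Icc 1 n) :
    x i = 2 * (∑ j ∈ Icc 1 (i - 1), m j * x j) + 1 := by
  refine Nat.eq_of_mul_eq_mul_right (hm i) ?_
  obtain ⟨hi1, hin⟩ := mem_Icc.mp hi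
  rcases (by omega : i = 1 ∨ 2 ≤ i) with rfl | hi2
  · simp [hx, hf1]
  · simp_rw [hx, hf2 i hi2 hin, ← hx, mul_comm (x _)]
    ring

lemma sum_two_mul_lt (hm : ∀ i, 0 < m i) (hf1 : f 1 = m 1)
    (hf2 : ∀ i, 2 ≤ i → i ≤ n → f i = m i * (2 * (∑ j ∈ Icc 1 (i - 1), f j) + 1))
    (hx : ∀ i, x i * m i = f i) {i : ℕ} (hi : i ∈ Icc 1 n) :
    ∑ j ∈ Icc 1 (i - 1), 2 * (m j : ℤ) * x j < x i := by
  have hxi : (x i : ℤ) = 2 * ∑ j ∈ Icc 1 (i - 1), (m j : ℤ) * x j + 1 := by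
    exact_mod_cast x_eq_two_mul_sum_add_one hm hf1 hf2 hx hi
  simp only [mul_assoc, ← mul_sum]
  omega

lemma f_succ_eq (hr : 0 < r)
    (hf3 : ∀ i, n + 1 ≤ i → i ≤ n + r - 1 → f i = (m (i - 1) + 1) * (f (i - 1) / m (i - 1)))
    (hf4 : f (n + r) =
      (m (n + r - 1) + 1) * (f (n + r - 1) / m (n + r - 1)) + (2 ^ r - L) * f (n + 1))
    (hmn : 0 < m n) (hxn : 0 < x n) (hx : x n * m n = f n) :
    f (n + 1) = (m n + 1) * x n := by
  have hquot : f n / m n = x n := by rw [← hx, Nat.mul_div_cancel _ hmn]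
  rcases (by omega : r = 1 ∨ 2 ≤ r) with rfl | hr2
  · -- `hf4` now reads `f (n+1) = (m n + 1) * x n + (2 - L) * f (n+1)`, which forces `2 - L = 0`.
    simp only [Nat.add_sub_cancel, hquot, pow_one] at hf4
    have hpos : 0 < (m n + 1) * x n := by positivity
    rcases Nat.eq_zero_or_pos (2 - L) with h0 | hL
    · simpa [h0] using hf4
    · have := Nat.le_mul_of_pos_left (f (n + 1)) hL
      omega
  · simpa [hquot] using hf3 (n + 1) le_rfl (by omega)

lemma f_succ_dvd (hm1 : ∀ i, n + 1 ≤ i → i ≤ n + r → m i = 1)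
    (hf3 : ∀ i, n + 1 ≤ i → i ≤ n + r - 1 → f i = (m (i - 1) + 1) * (f (i - 1) / m (i - 1)))
    (hf4 : f (n + r) =
      (m (n + r - 1) + 1) * (f (n + r - 1) / m (n + r - 1)) + (2 ^ r - L) * f (n + 1))
    {j : ℕ} (hj : j ∈ Icc (n + 1) (n + r)) : f (n + 1) ∣ f j := by
  have hdouble : ∀ j, n + 1 ≤ j → j ≤ n + r - 1 → f (n + 1) ∣ f j := by
    intro j hj
    induction j, hj using Nat.le_induction with
    | base => exact fun _ => dvd_rfl
    | succ j hj ih =>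
      intro hj'
      rw [hf3 (j + 1) (by omega) hj', Nat.add_sub_cancel, hm1 j hj (by omega), Nat.div_one]
      exact (ih (by omega)).mul_left _
  obtain ⟨hj1, hj2⟩ := mem_Icc.mp hj
  rcases (by omega : j = n + 1 ∨ j ≤ n + r - 1 ∨ (j = n + r ∧ 2 ≤ r)) with rfl | h | ⟨rfl, hr⟩
  · exact dvd_rfl
  · exact hdouble j hj1 h
  · rw [hf4, hm1 _ (by omega) (by omega), Nat.div_one]
    exact dvd_add ((hdouble _ (by omega) le_rfl).mul_left _) (dvd_mul_left _ _)

end Construction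

theorem stmt_11_general (L r n : ℕ) (hr : 0 < r) (hn : 0 < n)
    (m f : ℕ → ℕ) (hm : ∀ i, 0 < m i)
    (hm1 : ∀ i, n + 1 ≤ i → i ≤ n + r → m i = 1)
    (hf1 : f 1 = m 1)
    (hf2 : ∀ i, 2 ≤ i → i ≤ n → f i = m i * (2 * (∑ j ∈ Finset.Icc 1 (i - 1), f j) + 1))
    (hf3 : ∀ i, n + 1 ≤ i → i ≤ n + r - 1 →
      f i = (m (i - 1) + 1) * (f (i - 1) / m (i - 1)))
    (hf4 : f (n + r) =
      (m (n + r - 1) + 1) * (f (n + r - 1) / m (n + r - 1)) + (2 ^ r - L) * f (n + 1))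
    (x : ℕ → ℕ) (hx : ∀ i, x i * m i = f i)
    (a : ℕ → ℕ) (ha : ∀ i, 1 ≤ i → i ≤ n → 1 ≤ a i ∧ a i ≤ m i)
    (γ : ℕ → ℤ)
    (hγ : ∀ i, 1 ≤ i → i ≤ n + r → γ i = -1 ∨ γ i = 0 ∨ γ i = 1)
    (hγ0 : ∃ i, 1 ≤ i ∧ i ≤ n + r ∧ γ i = 0)
    (z : ℤ)
    (hz : z = (∑ i ∈ Finset.Icc 1 n, γ i * ((a i : ℤ) * (x i : ℤ))) +
      ∑ i ∈ Finset.Icc (n + 1) (n + r), γ i * (x i : ℤ))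
    (hmem : ∃ (a' : ℕ → ℕ) (β : ℕ → ℤ),
      (∀ i, 1 ≤ i → i ≤ n → 1 ≤ a' i ∧ a' i ≤ m i) ∧
      (∀ i, 1 ≤ i → i ≤ n + r → β i = 1 ∨ β i = -1) ∧
      z = (∑ i ∈ Finset.Icc 1 n, β i * ((a' i : ℤ) * (x i : ℤ))) +
        ∑ i ∈ Finset.Icc (n + 1) (n + r), β i * (x i : ℤ)) :
    (∀ i, 1 ≤ i → i ≤ n → γ i ≠ 0) ∧ ∃ s, n + 1 ≤ s ∧ s ≤ n + r ∧ γ s = 0 := by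
  obtain ⟨a', β, ha', hβ, hz'⟩ := hmem
  have hsup := fun i (hi : i ∈ Icc 1 n) => sum_two_mul_lt hm hf1 hf2 hx hi
  have hxn : (0 : ℤ) < x n :=
    (sum_nonneg fun j _ => by positivity).trans_lt (hsup n (mem_Icc.mpr ⟨hn, le_rfl⟩))
  have hF : f (n + 1) = (m n + 1) * x n := f_succ_eq hr hf3 hf4 (hm n) (by omega) (hx n)
  set e : ℕ → ℤ := fun j => γ j * a j - β j * a' j with he
  have hhead : ∑ j ∈ Icc 1 n, e j * x j = ∑ i ∈ Icc (n + 1) (n + r), (β i - γ i) * x i := by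
    simp only [he, sub_mul, sum_sub_distrib, mul_assoc]
    linarith
  obtain ⟨c, hc⟩ : ((m n + 1) * x n : ℤ) ∣ ∑ j ∈ Icc 1 n, e j * x j := by
    rw [hhead]
    refine dvd_sum fun i hi => Dvd.dvd.mul_left ?_ _
    obtain ⟨hi1, hi2⟩ := mem_Icc.mp hi
    have hxi : x i = f i := by simpa [hm1 i hi1 hi2] using hx i
    rw [hxi]
    exact_mod_cast hF ▸ f_succ_dvd hm1 hf3 hf4 hi
  have hbound : ∀ j ∈ Icc 1 n, |e j| ≤ 2 * (m j : ℤ) := fun j hj => by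
    obtain ⟨hj1, hjn⟩ := mem_Icc.mp hj
    refine abs_mul_sub_mul_le ?_ ?_ (ha j hj1 hjn).2 (ha' j hj1 hjn).2
    · rcases hγ j hj1 (by omega) with h | h | h <;> simp [h]
    · rcases hβ j hj1 (by omega) with h | h <;> simp [h]
  obtain ⟨hbelow, hlast⟩ := coeffs_of_sum_mul_eq_mul_last (x := fun j => (x j : ℤ))
    (c := (m n + 1) * c) hn (fun j => by positivity) hsup hbound (by rw [hc]; ring)
  have hdvd : ∀ i ∈ Icc 1 n, (m i + 1 : ℤ) ∣ e i := fun i hi => by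
    obtain ⟨hi1, hin⟩ := mem_Icc.mp hi
    rcases (by omega : i < n ∨ i = n) with hi | rfl
    · simp [hbelow i (mem_Ico.mpr ⟨hi1, hi⟩)]
    · exact ⟨c, hlast⟩
  have hne : ∀ i, 1 ≤ i → i ≤ n → γ i ≠ 0 := fun i hi1 hin hγi =>
    not_add_one_dvd_sign_mul (hβ i hi1 (by omega)) (ha' i hi1 hin)
      (by simpa [he, hγi] using hdvd i (mem_Icc.mpr ⟨hi1, hin⟩))
  obtain ⟨s, hs1, hsr, hγs⟩ := hγ0
  exact ⟨hne, s, by by_contra h; exact hne s hs1 (by omega) hγs, hsr, hγs⟩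

/-- Tail–Zero property: in Construction 2, suppose a half-sum
`z = ∑_{i=1}^n γ i * a i * x i + ∑_{i=n+1}^{n+r} γ i * x i` with `γ i ∈ {−1,0,1}` and
some `γ i = 0`, lies in some block `D_{a'}` of the construction (i.e. `z` is
representable with a sign vector `β ∈ {±1}^{n+r}` and coefficients `a' i ∈ [m i]`).
Then `γ i ≠ 0` for all `i ∈ [n]`, and there is an index `s ∈ [n+1 : n+r]` with
`γ s = 0`. -/
theorem stmt_11 (L r n : ℕ) (hL : 0 < L) (hr : 0 < r) (hLr : L ≤ 2 ^ r) (hn : 0 < n)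
    (m f : ℕ → ℕ) (hm : ∀ i, 0 < m i)
    (hm1 : ∀ i, n + 1 ≤ i → i ≤ n + r → m i = 1)
    (hf1 : f 1 = m 1)
    (hf2 : ∀ i, 2 ≤ i → i ≤ n → f i = m i * (2 * (∑ j ∈ Finset.Icc 1 (i - 1), f j) + 1))
    (hdvd : ∀ i, 1 ≤ i → i ≤ n + r → m i ∣ f i)
    (hf3 : ∀ i, n + 1 ≤ i → i ≤ n + r - 1 →
      f i = (m (i - 1) + 1) * (f (i - 1) / m (i - 1)))
    (hf4 : f (n + r) =
      (m (n + r - 1) + 1) * (f (n + r - 1) / m (n + r - 1)) + (2 ^ r - L) * f (n + 1))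
    (x : ℕ → ℕ) (hx : ∀ i, x i * m i = f i)
    (a : ℕ → ℕ) (ha : ∀ i, 1 ≤ i → i ≤ n → 1 ≤ a i ∧ a i ≤ m i)
    (γ : ℕ → ℤ)
    (hγ : ∀ i, 1 ≤ i → i ≤ n + r → γ i = -1 ∨ γ i = 0 ∨ γ i = 1)
    (hγ0 : ∃ i, 1 ≤ i ∧ i ≤ n + r ∧ γ i = 0)
    (z : ℤ)
    (hz : z = (∑ i ∈ Finset.Icc 1 n, γ i * ((a i : ℤ) * (x i : ℤ))) +
      ∑ i ∈ Finset.Icc (n + 1) (n + r), γ i * (x i : ℤ))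
    (hmem : ∃ (a' : ℕ → ℕ) (β : ℕ → ℤ),
      (∀ i, 1 ≤ i → i ≤ n → 1 ≤ a' i ∧ a' i ≤ m i) ∧
      (∀ i, 1 ≤ i → i ≤ n + r → β i = 1 ∨ β i = -1) ∧
      z = (∑ i ∈ Finset.Icc 1 n, β i * ((a' i : ℤ) * (x i : ℤ))) +
        ∑ i ∈ Finset.Icc (n + 1) (n + r), β i * (x i : ℤ)) :
    (∀ i, 1 ≤ i → i ≤ n → γ i ≠ 0) ∧ ∃ s, n + 1 ≤ s ∧ s ≤ n + r ∧ γ s = 0 :=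
  stmt_11_general L r n hr hn m f hm hm1 hf1 hf2 hf3 hf4 x hx a ha γ hγ hγ0 z hz hmem
end

section
/- Let r ≥ 1 and c ∈ [0, 2^{r−1}−1]. Consider V = { Σ_{j=1}^{r−1} 2^{j−1} β_j + (2^{r−1} + c) β_r : β ∈ {−1,1}^r }. Then V = { ±(c+1), ±(c+3), …, ±(c + 2^r − 1) }, i.e., V consists exactly of the integers of the form ±(c + odd) with the odd part ranging over the odd numbers in [1, 2^r − 1]; in particular |V| = 2^r. -/
/-!
Induction on the number of signs: the sums `∑_{j ≤ n} ±2^(j-1)` are exactly the arithmetic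
progression `1 - 2^n, 3 - 2^n, …, 2^n - 1`, since adding `±2^n` to it yields the progression of
twice the length. The top term `±(2^(r-1) + c)` moves this progression to `c + 1, c + 3, …,
c + 2^r - 1` or to its negative, and for `c ≥ 0` these two halves are disjoint.
-/

open Finset

def signedSums (n : ℕ) (w : ℕ → ℤ) : Set ℤ :=
  {z | ∃ β : ℕ → ℤ, (∀ j, 1 ≤ j → j ≤ n → β j = 1 ∨ β j = -1) ∧
    z = ∑ j ∈ Icc 1 n, w j * β j}

theorem signedSums_zero (w : ℕ → ℤ) : signedSums 0 w = {0} := by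
  ext z
  simp only [signedSums, Set.mem_ofPred_eq, Set.mem_singleton_iff]
  exact ⟨fun ⟨_, _, hz⟩ => by simpa using hz, fun hz => ⟨1, by omega, by simpa using hz⟩⟩

theorem exists_signs_sum_add_iff (n : ℕ) (w : ℕ → ℤ) (a z : ℤ) :
    (∃ β : ℕ → ℤ, (∀ j, 1 ≤ j → j ≤ n + 1 → β j = 1 ∨ β j = -1) ∧
      z = ∑ j ∈ Icc 1 n, w j * β j + a * β (n + 1)) ↔
    ∃ y ∈ signedSums n w, z = y + a ∨ z = y - a := by
  constructor
  · rintro ⟨β, hβ, rfl⟩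
    refine ⟨_, ⟨β, fun j h1 h2 => hβ j h1 (by omega), rfl⟩, ?_⟩
    rcases hβ (n + 1) (by omega) le_rfl with h | h <;> simp [h, sub_eq_add_neg]
  · rintro ⟨y, ⟨β, hβ, rfl⟩, hz⟩
    obtain ⟨s, hs, hz⟩ : ∃ s : ℤ, (s = 1 ∨ s = -1) ∧
        z = ∑ j ∈ Icc 1 n, w j * β j + a * s := by
      rcases hz with rfl | rfl
      exacts [⟨1, by simp⟩, ⟨-1, by simp [sub_eq_add_neg]⟩]
    have hsum : ∑ j ∈ Icc 1 n, w j * Function.update β (n + 1) s j =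
        ∑ j ∈ Icc 1 n, w j * β j :=
      sum_congr rfl fun j hj => by
        rw [Function.update_of_ne (by grind)]
    refine ⟨Function.update β (n + 1) s, fun j h1 h2 => ?_, by simpa [hsum]⟩
    rcases eq_or_ne j (n + 1) with rfl | hj
    · simpa using hs
    · simpa [hj] using hβ j h1 (by omega)

theorem mem_signedSums_succ {n : ℕ} {w : ℕ → ℤ} {z : ℤ} :
    z ∈ signedSums (n + 1) w ↔ ∃ y ∈ signedSums n w, z = y + w (n + 1) ∨ z = y - w (n + 1) := by
  rw [← exists_signs_sum_add_iff]
  simp only [signedSums, Set.mem_ofPred_eq, sum_Icc_succ_top (Nat.le_add_left 1 n)]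

theorem mem_signedSums_two_pow {n : ℕ} {z : ℤ} :
    z ∈ signedSums n (fun j => 2 ^ (j - 1)) ↔ ∃ m : ℕ, m < 2 ^ n ∧ z = 2 * m + 1 - 2 ^ n := by
  induction n generalizing z with
  | zero => simp [signedSums_zero]
  | succ n ih =>
    simp only [mem_signedSums_succ, ih, Nat.add_sub_cancel]
    rw [pow_succ]
    constructor
    · rintro ⟨y, ⟨m, hm, rfl⟩, rfl | rfl⟩
      · exact ⟨m + 2 ^ n, by omega, by push_cast; ring⟩
      · exact ⟨m, by omega, by ring⟩
    · rintro ⟨m, hm, rfl⟩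
      rcases lt_or_ge m (2 ^ n) with hlt | hge
      · exact ⟨_, ⟨m, hlt, rfl⟩, Or.inr (by ring)⟩
      · refine ⟨_, ⟨m - 2 ^ n, by omega, rfl⟩, Or.inl ?_⟩
        push_cast [hge]
        ring

theorem exists_signedSums_two_pow_add_iff (n c : ℕ) (z : ℤ) :
    (∃ y ∈ signedSums n (fun j => 2 ^ (j - 1)), z = y + (2 ^ n + c) ∨ z = y - (2 ^ n + c)) ↔
      ∃ k : ℕ, k < 2 ^ n ∧ (z = c + 2 * k + 1 ∨ z = -(c + 2 * k + 1)) := by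
  simp only [mem_signedSums_two_pow]
  constructor
  · rintro ⟨y, ⟨m, hm, rfl⟩, rfl | rfl⟩
    · exact ⟨m, hm, Or.inl (by ring)⟩
    · refine ⟨2 ^ n - 1 - m, by omega, Or.inr ?_⟩
      push_cast [Nat.sub_sub, Nat.cast_sub (by omega : 1 + m ≤ 2 ^ n)]
      ring
  · rintro ⟨k, hk, rfl | rfl⟩
    · exact ⟨_, ⟨k, hk, rfl⟩, Or.inl (by ring)⟩
    · refine ⟨_, ⟨2 ^ n - 1 - k, by omega, rfl⟩, Or.inr ?_⟩
      push_cast [Nat.sub_sub, Nat.cast_sub (by omega : 1 + k ≤ 2 ^ n)]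
      ring

theorem ncard_plus_minus_shifted_odd (c N : ℕ) :
    {z : ℤ | ∃ k : ℕ, k < N ∧ (z = c + 2 * k + 1 ∨ z = -(c + 2 * k + 1))}.ncard = 2 * N := by
  have hset : {z : ℤ | ∃ k : ℕ, k < N ∧ (z = c + 2 * k + 1 ∨ z = -(c + 2 * k + 1))} =
      (fun k : ℕ => (c + 2 * k + 1 : ℤ)) '' Set.Iio N ∪
        (fun k : ℕ => -(c + 2 * k + 1 : ℤ)) '' Set.Iio N := by
    ext z
    simp only [Set.mem_ofPred_eq, Set.mem_union, Set.mem_image, Set.mem_Iio]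
    grind
  have hdisj : Disjoint ((fun k : ℕ => (c + 2 * k + 1 : ℤ)) '' Set.Iio N)
      ((fun k : ℕ => -(c + 2 * k + 1 : ℤ)) '' Set.Iio N) := by
    rw [Set.disjoint_left]
    rintro _ ⟨a, -, rfl⟩ ⟨b, -, hb⟩
    dsimp only at hb
    omega
  rw [hset, Set.ncard_union_eq hdisj, Set.ncard_image_of_injective _ (fun a b h => by omega),
    Set.ncard_image_of_injective _ (fun a b h => by omega), Set.ncard_Iio_nat, two_mul]

theorem stmt_13_general (r c : ℕ) (hr : 1 ≤ r) :
    let V : Set ℤ := { z : ℤ | ∃ β : ℕ → ℤ,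
      (∀ j, 1 ≤ j → j ≤ r → β j = 1 ∨ β j = -1) ∧
      z = (∑ j ∈ Finset.Icc 1 (r - 1), 2 ^ (j - 1) * β j) + (2 ^ (r - 1) + (c : ℤ)) * β r }
    V = { z : ℤ | ∃ k : ℕ, k < 2 ^ (r - 1) ∧
        (z = (c : ℤ) + 2 * k + 1 ∨ z = -((c : ℤ) + 2 * k + 1)) } ∧
    V.ncard = 2 ^ r := by
  obtain ⟨n, rfl⟩ : ∃ n, r = n + 1 := ⟨r - 1, by omega⟩
  intro V
  have hVeq : V = {z : ℤ | ∃ k : ℕ, k < 2 ^ n ∧ (z = c + 2 * k + 1 ∨ z = -(c + 2 * k + 1))} :=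
    Set.ext fun z =>
      (exists_signs_sum_add_iff n _ _ z).trans (exists_signedSums_two_pow_add_iff n c z)
  refine ⟨hVeq, ?_⟩
  rw [hVeq, ncard_plus_minus_shifted_odd, pow_succ, mul_comm]

/-- for `r ≥ 1` and `0 ≤ c ≤ 2^(r-1) - 1`, the set
`V = { ∑_{j=1}^{r-1} 2^(j-1) β j + (2^(r-1) + c) β r : β ∈ {−1,1}^r }` equals
`{ ±(c + 2k + 1) : 0 ≤ k < 2^(r-1) }`, and in particular `|V| = 2^r`. -/
theorem stmt_13 (r c : ℕ) (hr : 1 ≤ r) (hc : c ≤ 2 ^ (r - 1) - 1) :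
    let V : Set ℤ := { z : ℤ | ∃ β : ℕ → ℤ,
      (∀ j, 1 ≤ j → j ≤ r → β j = 1 ∨ β j = -1) ∧
      z = (∑ j ∈ Finset.Icc 1 (r - 1), 2 ^ (j - 1) * β j) + (2 ^ (r - 1) + (c : ℤ)) * β r }
    V = { z : ℤ | ∃ k : ℕ, k < 2 ^ (r - 1) ∧
        (z = (c : ℤ) + 2 * k + 1 ∨ z = -((c : ℤ) + 2 * k + 1)) } ∧
    V.ncard = 2 ^ r :=
  stmt_13_general r c hr
end

section
/- Let q, n, r be positive integers, L = 2^r, K = (2^{r+1}−1)(1+2q)^n, sum-DoF g_new = 2^{n+r}, and g_YWCC = (2^{r+1}−1)((1+2q)^n − (2q)^n) + 2^r. Then g_YWCC / g_new < 2q^n((1 + 1/(2q))^n − 1) + 2^{−n}. -/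
/-- for positive integers `q, n, r` (with `L = 2^r`,
`K = (2^(r+1)-1)(1+2q)^n`, `g_new = 2^(n+r)` and
`g_YWCC = (2^(r+1)-1)((1+2q)^n - (2q)^n) + 2^r`), one has
`g_YWCC / g_new < 2 q^n ((1 + 1/(2q))^n - 1) + 2^(-n)`. -/
theorem stmt_17 (q n r : ℕ) (hq : 0 < q) (hn : 0 < n) (hr : 0 < r) :
    (((2 : ℝ) ^ (r + 1) - 1) * ((1 + 2 * (q : ℝ)) ^ n - (2 * (q : ℝ)) ^ n) + 2 ^ r) /
        2 ^ (n + r) <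
      2 * (q : ℝ) ^ n * ((1 + 1 / (2 * (q : ℝ))) ^ n - 1) + 1 / 2 ^ n := by
  have hx : (0:ℝ) < q := by exact_mod_cast hq
  have h2x : (0:ℝ) < 2 * q := by linarith
  have key : (1 + 2 * (q : ℝ)) ^ n = (2 * q) ^ n * (1 + 1 / (2 * q)) ^ n := by
    rw [← mul_pow]; congr 1; field_simp; ring
  have hB : (1:ℝ) < (1 + 1 / (2 * (q : ℝ))) ^ n := by
    have h1 : (1:ℝ) < 1 + 1 / (2 * q) := by
      have : (0:ℝ) < 1 / (2 * q) := by positivity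
      linarith
    exact one_lt_pow₀ h1 hn.ne'
  set B : ℝ := (1 + 1 / (2 * (q : ℝ))) ^ n with hBdef
  have hpn : (0:ℝ) < (2:ℝ) ^ n := by positivity
  have hpr : (0:ℝ) < (2:ℝ) ^ r := by positivity
  have h2q : (2 * (q:ℝ)) ^ n = 2 ^ n * (q:ℝ) ^ n := mul_pow (2:ℝ) (q:ℝ) n
  have hpow : (2:ℝ) ^ (n + r) = 2 ^ n * 2 ^ r := pow_add 2 n r
  rw [div_lt_iff₀ (by positivity), key, h2q, hpow]
  have ht : (0:ℝ) < 2 ^ n * (q:ℝ) ^ n * (B - 1) := by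
    have h1 := pow_pos hx n
    exact mul_pos (by positivity) (sub_pos.mpr hB)
  have eR : (2 * (q:ℝ) ^ n * (B - 1) + 1 / 2 ^ n) * ((2:ℝ) ^ n * 2 ^ r)
      = 2 * 2 ^ r * (2 ^ n * (q:ℝ) ^ n * (B - 1)) + 2 ^ r := by
    field_simp
  have eL : ((2:ℝ) ^ (r + 1) - 1) * (2 ^ n * (q:ℝ) ^ n * B - 2 ^ n * (q:ℝ) ^ n) + 2 ^ r
      = (2 * 2 ^ r - 1) * (2 ^ n * (q:ℝ) ^ n * (B - 1)) + 2 ^ r := by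
    rw [pow_succ]; ring
  rw [eR, eL]
  linarith [mul_pos hpr ht]
end

section
/- Let q, n, r be positive integers and K = (2^{r+1}−1)(1+2q)^n. Then ((2^{r+1}−1)((1+2q)^n − (2q)^n) + 2^r) · C(K, (2^{r+1}−1)(2q)^n) / K > (1 − (2q/(1+2q))^n) · (1 + 1/(2q))^{n(2^{r+1}−1)(2q)^n}, where C(·,·) denotes the binomial coefficient. -/
/-!
With `a = 2^(r+1) - 1`, `K = a (1+2q)^n` and `b = a (2q)^n` we have `K / b = (1 + 1/(2q))^n` and
`1 - (2q/(1+2q))^n = (K - b) / K`, so the claim reads `(K - b) / K · (K/b)^b < (K - b + 2^r) · C(K,b) / K`.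
This follows from `(K/b)^b ≤ C(K,b)`, the summand `2^r > 0` making it strict.
-/

theorem Nat.div_pow_le_choose {α : Type*} [Field α] [LinearOrder α] [IsStrictOrderedRing α]
    {n k : ℕ} (hkn : k ≤ n) : ((n : α) / k) ^ k ≤ n.choose k := by
  induction k generalizing n with
  | zero => simp
  | succ k ih =>
    obtain ⟨m, rfl⟩ : ∃ m, n = m + 1 := ⟨n - 1, by omega⟩
    rcases Nat.eq_zero_or_pos k with rfl | hk
    · simp
    have hkm : (k : α) ≤ m := by exact_mod_cast Nat.le_of_succ_le_succ hkn
    have hk_pos : (0 : α) < k := by exact_mod_cast hk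
    have hstep : ((m : α) + 1) / (k + 1) ≤ m / k := by
      rw [div_le_div_iff₀ (by positivity) hk_pos]
      nlinarith
    have hchoose : ((m + 1).choose (k + 1) : α) = (m + 1) / (k + 1) * m.choose k := by
      rw [div_mul_eq_mul_div, eq_div_iff (by positivity)]
      exact_mod_cast (Nat.add_one_mul_choose_eq m k).symm
    calc ((↑(m + 1) : α) / ↑(k + 1)) ^ (k + 1)
        = (m + 1) / (k + 1) * (((m : α) + 1) / (k + 1)) ^ k := by push_cast; ring
      _ ≤ (m + 1) / (k + 1) * ((m : α) / k) ^ k := by gcongr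
      _ ≤ (m + 1) / (k + 1) * m.choose k := by gcongr; exact ih (by omega)
      _ = ((m + 1).choose (k + 1) : α) := hchoose.symm

theorem one_sub_div_mul_lt_add_mul_div {α : Type*} [Field α] [LinearOrder α]
    [IsStrictOrderedRing α] {K b c B C : α} (hK : 0 < K) (hbK : b ≤ K) (hc : 0 < c)
    (hC : 0 < C) (hBC : B ≤ C) : (1 - b / K) * B < (K - b + c) * C / K := by
  rw [one_sub_div hK.ne', div_mul_eq_mul_div]
  gcongr ?_ / K
  calc (K - b) * B ≤ (K - b) * C := by gcongr
    _ < (K - b + c) * C := by gcongr; linarith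

theorem stmt_18_general (q n r : ℕ) (hq : 0 < q) :
    (((2 : ℝ) ^ (r + 1) - 1) * ((1 + 2 * (q : ℝ)) ^ n - (2 * (q : ℝ)) ^ n) + 2 ^ r) *
        (Nat.choose ((2 ^ (r + 1) - 1) * (1 + 2 * q) ^ n) ((2 ^ (r + 1) - 1) * (2 * q) ^ n) : ℝ) /
        ((((2 ^ (r + 1) - 1) * (1 + 2 * q) ^ n : ℕ) : ℝ)) >
      (1 - (2 * (q : ℝ) / (1 + 2 * (q : ℝ))) ^ n) *
        (1 + 1 / (2 * (q : ℝ))) ^ (n * ((2 ^ (r + 1) - 1) * (2 * q) ^ n)) := by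
  set K : ℕ := (2 ^ (r + 1) - 1) * (1 + 2 * q) ^ n
  set b : ℕ := (2 ^ (r + 1) - 1) * (2 * q) ^ n
  set a : ℝ := (2 : ℝ) ^ (r + 1) - 1 with ha
  have ha_pos : 0 < a := by rw [ha, sub_pos]; exact one_lt_pow₀ one_lt_two (Nat.succ_ne_zero r)
  have hK : (K : ℝ) = a * (1 + 2 * q) ^ n := by simp [K, a, Nat.one_le_two_pow]
  have hb : (b : ℝ) = a * (2 * q) ^ n := by simp [b, a, Nat.one_le_two_pow]
  have hbK : b ≤ K := Nat.mul_le_mul_left _ (Nat.pow_le_pow_left (by omega) n)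
  have hK_pos : (0 : ℝ) < K := by rw [hK]; positivity
  have hb_div_K : (b : ℝ) / K = (2 * q / (1 + 2 * q)) ^ n := by
    rw [hb, hK, mul_div_mul_left _ _ ha_pos.ne', div_pow]
  have hK_div_b : (K : ℝ) / b = (1 + 1 / (2 * q)) ^ n := by
    rw [hK, hb, mul_div_mul_left _ _ ha_pos.ne', ← div_pow]
    congr 1
    field_simp
    ring
  have hpow_le_choose : (1 + 1 / (2 * (q : ℝ))) ^ (n * b) ≤ K.choose b := by
    rw [pow_mul, ← hK_div_b]
    exact Nat.div_pow_le_choose hbK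
  rw [← hb_div_K, gt_iff_lt, show a * ((1 + 2 * q) ^ n - (2 * q) ^ n) = K - b by rw [hK, hb]; ring]
  exact one_sub_div_mul_lt_add_mul_div hK_pos (by exact_mod_cast hbK) (by positivity)
    (by exact_mod_cast Nat.choose_pos hbK) hpow_le_choose

/-- for positive integers `q, n, r` and `K = (2^(r+1)-1)(1+2q)^n`, the
subpacketization ratio satisfies
`((2^(r+1)-1)((1+2q)^n - (2q)^n) + 2^r) * C(K, (2^(r+1)-1)(2q)^n) / K
  > (1 - (2q/(1+2q))^n) * (1 + 1/(2q))^(n (2^(r+1)-1) (2q)^n)`. -/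
theorem stmt_18 (q n r : ℕ) (hq : 0 < q) (hn : 0 < n) (hr : 0 < r) :
    (((2 : ℝ) ^ (r + 1) - 1) * ((1 + 2 * (q : ℝ)) ^ n - (2 * (q : ℝ)) ^ n) + 2 ^ r) *
        (Nat.choose ((2 ^ (r + 1) - 1) * (1 + 2 * q) ^ n) ((2 ^ (r + 1) - 1) * (2 * q) ^ n) : ℝ) /
        ((((2 ^ (r + 1) - 1) * (1 + 2 * q) ^ n : ℕ) : ℝ)) >
      (1 - (2 * (q : ℝ) / (1 + 2 * (q : ℝ))) ^ n) *
        (1 + 1 / (2 * (q : ℝ))) ^ (n * ((2 ^ (r + 1) - 1) * (2 * q) ^ n)) :=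
  stmt_18_general q n r hq
end
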